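/- arXiv:2201.04514 — 4 statements merged into one kernel-verified Lean document; each statement's English description precedes it below -/
import Mathlib

section
/- (Tree / Penrose inequality.) Let S be a finite set with |S| ≥ 2 and let u assign to every unordered pair e of distinct elements of S a real number u_e ∈ [−1, 0]. Then |∑_{G ∈ 𝒞_S} ∏_{e ∈ E(G)} u_e| ≤ ∑_{T ∈ 𝒯_S} ∏_{e ∈ E(T)} |u_e|. In particular, if u_e = −1_{e ∈ A} for some set A of pairs, the absolute value of the connected-graph cumulant is bounded by the number of trees on S all of whose edges lie in A. -/
/-!
Penrose's partition scheme. Label the edges injectively and send every connected graph `G` to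
its Kruskal tree: the edges of `G` whose endpoints are not joined by smaller edges of `G`.
The fibre over a tree `T` is the Boolean interval `[T, T ∪ X(T)]`, where `X(T)` is the set of
edges that close a cycle with smaller edges of `T`. The sum over that fibre factors as
`∏_{e ∈ T} u_e · ∏_{e ∈ X(T)} (1 + u_e)`, and the second factor lies in `[0, 1]`.
-/

open scoped Classical

variable {V : Type*} [Fintype V] [DecidableEq V]

/-- Graphs on a finite vertex set `B`, encoded as finsets of non-diagonal edges with
both endpoints in `B`. -/
noncomputable def graphsOn (B : Finset V) : Finset (Finset (Sym2 V)) :=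
  B.sym2.powerset.filter fun G => ∀ e ∈ G, ¬ e.IsDiag

/-- The edge set `G` connects all the vertices of `B`. -/
def ConnOn (B : Finset V) (G : Finset (Sym2 V)) : Prop :=
  ∀ x ∈ B, ∀ y ∈ B, (SimpleGraph.fromEdgeSet (G : Set (Sym2 V))).Reachable x y

/-- Connected graphs on `B`. -/
noncomputable def connGraphsOn (B : Finset V) : Finset (Finset (Sym2 V)) :=
  (graphsOn B).filter fun G => ConnOn B G

/-- Trees (minimally connected graphs) on `B`: connected graphs with `|B| - 1` edges. -/
noncomputable def treesOn (B : Finset V) : Finset (Finset (Sym2 V)) :=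
  (connGraphsOn B).filter fun G => G.card = B.card - 1

open SimpleGraph Finset

section Kruskal

variable {α β : Type*} {F F' G T : Finset (Sym2 α)} {e : Sym2 α}

def Joins (F : Finset (Sym2 α)) : Sym2 α → Prop :=
  Sym2.lift ⟨fun x y => (fromEdgeSet (F : Set (Sym2 α))).Reachable x y,
    fun _ _ => propext reachable_comm⟩

@[simp]
lemma joins_mk {x y : α} :
    Joins F s(x, y) ↔ (fromEdgeSet (F : Set (Sym2 α))).Reachable x y :=
  Iff.rfl

lemma joins_of_mem (he : e ∈ F) : Joins F e := by
  induction e with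
  | h x y =>
    by_cases hxy : x = y
    · exact hxy ▸ Reachable.refl _
    · exact (fromEdgeSet_adj _ |>.mpr ⟨he, hxy⟩).reachable

lemma Joins.mono (h : F ⊆ F') (he : Joins F e) : Joins F' e := by
  induction e with
  | h x y => exact Reachable.mono (fromEdgeSet_mono (by exact_mod_cast h)) he

lemma Joins.of_forall_joins (h : ∀ f ∈ F, Joins F' f) (he : Joins F e) : Joins F' e := by
  induction e with
  | h x y =>
    rw [joins_mk, reachable_iff_reflTransGen] at he ⊢
    refine Relation.reflTransGen_closed (fun a b hab => ?_) _ _ he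
    rw [← reachable_iff_reflTransGen]
    exact h _ (fromEdgeSet_adj _ |>.mp hab).1

variable [LinearOrder β] (w : Sym2 α → β)

/-- The edges that Kruskal's algorithm keeps when it scans `G` in increasing order of `w`. -/
noncomputable def kruskal (G : Finset (Sym2 α)) : Finset (Sym2 α) :=
  G.filter fun e => ¬ Joins (G.filter (w · < w e)) e

variable {w}

lemma mem_kruskal : e ∈ kruskal w G ↔ e ∈ G ∧ ¬ Joins (G.filter (w · < w e)) e :=
  mem_filter

lemma kruskal_subset : kruskal w G ⊆ G :=
  filter_subset _ _

lemma not_joins_kruskal_lt (he : e ∈ kruskal w G) :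
    ¬ Joins ((kruskal w G).filter (w · < w e)) e :=
  fun h => (mem_kruskal.mp he).2 (h.mono (filter_subset_filter _ kruskal_subset))

lemma joins_kruskal_le [WellFoundedLT β] (he : e ∈ G) :
    Joins ((kruskal w G).filter (w · ≤ w e)) e := by
  induction e using (InvImage.wf w wellFounded_lt).induction with
  | _ e ih =>
    by_cases hk : e ∈ kruskal w G
    · exact joins_of_mem (mem_filter.mpr ⟨hk, le_rfl⟩)
    · have hj : Joins (G.filter (w · < w e)) e := by
        simpa [mem_kruskal, he] using hk
      refine hj.of_forall_joins fun f hf => ?_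
      obtain ⟨hfG, hfe⟩ := mem_filter.mp hf
      refine (ih f hfe hfG).mono fun g hg => ?_
      rw [mem_filter] at hg ⊢
      exact ⟨hg.1, hg.2.trans hfe.le⟩

lemma isAcyclic_of_forall_not_joins_lt (hw : Function.Injective w)
    (h : ∀ e ∈ F, ¬ Joins (F.filter (w · < w e)) e) :
    (fromEdgeSet (F : Set (Sym2 α))).IsAcyclic := by
  induction F using Finset.induction_on_max_value w with
  | empty => simp
  | insert m F hmF hle ih =>
    have hlt : ∀ e ∈ F, w e < w m :=
      fun e he => (hle e he).lt_of_ne (hw.ne fun h => hmF (h ▸ he))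
    have hF : ∀ e ∈ F, (insert m F).filter (w · < w e) = F.filter (w · < w e) := by
      intro e he
      rw [filter_insert, if_neg (hlt e he).not_gt]
    have hm : (insert m F).filter (w · < w m) = F := by
      rw [filter_insert, if_neg (lt_irrefl _), filter_true_of_mem hlt]
    have hjm := h m (mem_insert_self m F)
    rw [hm] at hjm
    have ihF := ih fun e he => hF e he ▸ h e (mem_insert_of_mem he)
    induction m with
    | h x y =>
      rw [coe_insert, Set.insert_eq, fromEdgeSet_union, sup_comm]
      exact ihF.sup_edge_of_not_reachable hjm

lemma not_joins_lt_of_isAcyclic (hF : ∀ e ∈ F, ¬ e.IsDiag)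
    (hA : (fromEdgeSet (F : Set (Sym2 α))).IsAcyclic) (he : e ∈ F) :
    ¬ Joins (F.filter (w · < w e)) e := by
  induction e with
  | h x y =>
    have hbridge := isAcyclic_iff_forall_isBridge.mp hA
      (by rw [edgeSet_fromEdgeSet]; exact ⟨he, hF _ he⟩)
    refine fun hj => isBridge_iff.mp hbridge (Reachable.mono (fun a b hab => ?_) hj)
    obtain ⟨hab, hne⟩ := (fromEdgeSet_adj _).mp hab
    obtain ⟨habF, hlt⟩ := mem_filter.mp hab
    simp only [deleteEdges_adj, fromEdgeSet_adj, Set.mem_singleton_iff]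
    exact ⟨⟨habF, hne⟩, fun h => hlt.ne (congrArg w h)⟩

lemma kruskal_eq_iff [WellFoundedLT β] (hw : Function.Injective w)
    (hT : ∀ e ∈ T, ¬ Joins (T.filter (w · < w e)) e) :
    kruskal w G = T ↔ T ⊆ G ∧ ∀ e ∈ G, e ∉ T → Joins (T.filter (w · < w e)) e := by
  constructor
  · rintro rfl
    refine ⟨kruskal_subset, fun e he heT => (joins_kruskal_le (w := w) he).mono fun g hg => ?_⟩
    obtain ⟨hgT, hge⟩ := mem_filter.mp hg
    exact mem_filter.mpr ⟨hgT, hge.lt_of_ne (hw.ne (ne_of_mem_of_not_mem hgT heT))⟩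
  · rintro ⟨hTG, hext⟩
    ext e
    rw [mem_kruskal]
    constructor
    · rintro ⟨heG, hnj⟩
      by_contra heT
      exact hnj ((hext e heG heT).mono (filter_subset_filter _ hTG))
    · intro heT
      refine ⟨hTG heT, fun hj => hT e heT (hj.of_forall_joins fun f hf => ?_)⟩
      obtain ⟨hfG, hfe⟩ := mem_filter.mp hf
      by_cases hfT : f ∈ T
      · exact joins_of_mem (mem_filter.mpr ⟨hfT, hfe⟩)
      · refine (hext f hfG hfT).mono fun g hg => ?_
        obtain ⟨hgT, hgf⟩ := mem_filter.mp hg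
        exact mem_filter.mpr ⟨hgT, hgf.trans hfe⟩

lemma connected_kruskal [WellFoundedLT β] (hG : (fromEdgeSet (G : Set (Sym2 α))).Connected) :
    (fromEdgeSet (kruskal w G : Set (Sym2 α))).Connected := by
  refine connected_iff _ |>.mpr ⟨fun x y => ?_, hG.nonempty⟩
  have hxy : Joins G s(x, y) := hG.preconnected x y
  exact hxy.of_forall_joins fun f hf => (joins_kruskal_le hf).mono (filter_subset _ _)

lemma isTree_kruskal [WellFoundedLT β] (hw : Function.Injective w)
    (hG : (fromEdgeSet (G : Set (Sym2 α))).Connected) :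
    (fromEdgeSet (kruskal w G : Set (Sym2 α))).IsTree :=
  ⟨connected_kruskal hG, isAcyclic_of_forall_not_joins_lt hw fun _ => not_joins_kruskal_lt⟩

end Kruskal

section TreeInequality

lemma mem_connGraphsOn_univ [Nonempty V] {G : Finset (Sym2 V)} :
    G ∈ connGraphsOn (univ : Finset V) ↔
      (∀ e ∈ G, ¬ e.IsDiag) ∧ (fromEdgeSet (G : Set (Sym2 V))).Connected := by
  simp [connGraphsOn, graphsOn, ConnOn, connected_iff, Preconnected, ‹Nonempty V›]

lemma mem_treesOn_univ [Nonempty V] {T : Finset (Sym2 V)} :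
    T ∈ treesOn (univ : Finset V) ↔
      (∀ e ∈ T, ¬ e.IsDiag) ∧ (fromEdgeSet (T : Set (Sym2 V))).IsTree := by
  rw [treesOn, mem_filter, mem_connGraphsOn_univ, isTree_iff_connected_and_card, card_univ,
    Nat.card_eq_fintype_card (α := V), and_assoc]
  refine and_congr_right fun hT => and_congr_right fun _ => ?_
  have hE : (fromEdgeSet (T : Set (Sym2 V))).edgeSet = T := by
    rw [edgeSet_fromEdgeSet, sdiff_eq_left]
    exact Set.disjoint_left.mpr fun e heT hd => hT e heT hd
  rw [hE, Nat.card_coe_set_eq, Set.ncard_coe_finset]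
  have := Fintype.card_pos (α := V)
  omega

variable {β : Type*} [LinearOrder β] {w : Sym2 V → β}

lemma kruskal_mem_treesOn [Nonempty V] [WellFoundedLT β] (hw : Function.Injective w)
    {G : Finset (Sym2 V)} (hG : G ∈ connGraphsOn (univ : Finset V)) :
    kruskal w G ∈ treesOn (univ : Finset V) := by
  obtain ⟨hGd, hGc⟩ := mem_connGraphsOn_univ.mp hG
  exact mem_treesOn_univ.mpr ⟨fun e he => hGd e (kruskal_subset he), isTree_kruskal hw hGc⟩

variable (w) in
noncomputable def extraEdges (T : Finset (Sym2 V)) : Finset (Sym2 V) :=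
  univ.filter fun e => ¬ e.IsDiag ∧ e ∉ T ∧ Joins (T.filter (w · < w e)) e

lemma disjoint_extraEdges {T : Finset (Sym2 V)} : Disjoint T (extraEdges w T) :=
  disjoint_left.mpr fun _ heT he => (mem_filter.mp he).2.2.1 heT

lemma filter_kruskal_eq [Nonempty V] [WellFoundedLT β] (hw : Function.Injective w)
    {T : Finset (Sym2 V)} (hT : T ∈ treesOn (univ : Finset V)) :
    (connGraphsOn univ).filter (kruskal w · = T) = (extraEdges w T).powerset.image (T ∪ ·) := by
  obtain ⟨hTd, hTtree⟩ := mem_treesOn_univ.mp hT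
  ext G
  simp only [mem_filter, mem_image, mem_powerset]
  rw [kruskal_eq_iff hw fun e => not_joins_lt_of_isAcyclic hTd hTtree.isAcyclic,
    mem_connGraphsOn_univ]
  constructor
  · rintro ⟨⟨hGd, -⟩, hTG, hext⟩
    refine ⟨G \ T, fun e he => ?_, union_sdiff_of_subset hTG⟩
    obtain ⟨heG, heT⟩ := mem_sdiff.mp he
    exact mem_filter.mpr ⟨mem_univ _, hGd e heG, heT, hext e heG heT⟩
  · rintro ⟨s, hs, rfl⟩
    have hsx := fun e (he : e ∈ s) => (mem_filter.mp (hs he)).2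
    refine ⟨⟨fun e he => ?_, hTtree.connected.mono (fromEdgeSet_mono (by simp))⟩,
      subset_union_left, fun e he heT => ?_⟩
    · rcases mem_union.mp he with he | he
      exacts [hTd e he, (hsx e he).1]
    · rcases mem_union.mp he with he | he
      exacts [absurd he heT, (hsx e he).2.2]

lemma sum_filter_kruskal_eq [Nonempty V] [WellFoundedLT β] (hw : Function.Injective w)
    {T : Finset (Sym2 V)} (hT : T ∈ treesOn (univ : Finset V)) (u : Sym2 V → ℝ) :
    ∑ G ∈ (connGraphsOn univ).filter (kruskal w · = T), ∏ e ∈ G, u e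
      = (∏ e ∈ T, u e) * ∏ e ∈ extraEdges w T, (1 + u e) := by
  have hdisj : ∀ s ∈ (extraEdges w T).powerset, Disjoint T s :=
    fun s hs => disjoint_extraEdges.mono_right (mem_powerset.mp hs)
  rw [filter_kruskal_eq hw hT, sum_image, prod_one_add, mul_sum]
  · exact sum_congr rfl fun s hs => prod_union (hdisj s hs)
  · intro s hs s' hs' h
    rw [← union_sdiff_cancel_left (hdisj s hs), ← union_sdiff_cancel_left (hdisj s' hs')]
    exact congrArg (· \ T) h

end TreeInequality

lemma abs_prod_one_add_le_one {ι : Type*} {s : Finset ι} {f : ι → ℝ}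
    (hf : ∀ i ∈ s, f i ∈ Set.Icc (-1 : ℝ) 0) : |∏ i ∈ s, (1 + f i)| ≤ 1 := by
  rw [abs_prod]
  refine prod_le_one (fun _ _ => abs_nonneg _) fun i hi => abs_le.mpr ?_
  obtain ⟨h₁, h₂⟩ := hf i hi
  constructor <;> linarith

/-- Tree (Penrose) inequality: for `u_e ∈ [-1, 0]` on non-diagonal pairs,
`|∑_{G ∈ 𝒞_S} ∏_{e ∈ E(G)} u_e| ≤ ∑_{T ∈ 𝒯_S} ∏_{e ∈ E(T)} |u_e|`. -/
theorem tree_inequality (hV : 2 ≤ Fintype.card V) (u : Sym2 V → ℝ)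
    (hu : ∀ e : Sym2 V, ¬ e.IsDiag → u e ∈ Set.Icc (-1 : ℝ) 0) :
    |∑ G ∈ connGraphsOn (Finset.univ : Finset V), ∏ e ∈ G, u e|
      ≤ ∑ T ∈ treesOn (Finset.univ : Finset V), ∏ e ∈ T, |u e| := by
  have : Nonempty V := Fintype.card_pos_iff.mp (by omega)
  have hw := (Fintype.equivFin (Sym2 V)).injective
  rw [← sum_fiberwise_of_maps_to fun G => kruskal_mem_treesOn hw]
  refine (abs_sum_le_sum_abs _ _).trans (sum_le_sum fun T hT => ?_)
  rw [sum_filter_kruskal_eq hw hT, abs_mul, abs_prod]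
  exact mul_le_of_le_one_right (prod_nonneg fun _ _ => abs_nonneg _)
    (abs_prod_one_add_le_one fun e he => hu e (mem_filter.mp he).2.1)
end

section
/- (Tube estimate for clustering sets on the torus.) Let d ≥ 2. There exists a constant C_d > 0, depending only on d, such that for every ε ∈ (0,1), every velocity w ∈ ℝ^d and all times 0 ≤ t_0 ≤ t_1, the Haar (Lebesgue) measure of the set { x ∈ 𝕋^d : ∃ t ∈ [t_0, t_1] with dist_{𝕋^d}(x + t w, 0) ≤ ε } is at most C_d ε^{d−1} ( |w| (t_1 − t_0) + ε ). (This is the estimate on the set of relative positions for which two particles moving in straight lines encounter at distance ε during a given time interval.) -/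
/-!
Discretise the time interval into `n + 1 ≈ |w| (t₁ - t₀) / ε` equally spaced instants, so that
the path `t ↦ -t w` moves by at most `ε` between consecutive ones. A point within `ε` of the
path at some time is then within `2ε` of the path at one of these instants, so the set is covered
by `n + 1` balls of radius `2ε` for the sup metric on the torus, each of measure at most `(4ε)^d`.
-/

open MeasureTheory

/-- The unit `d`-dimensional torus. -/
abbrev Torus (d : ℕ) := Fin d → AddCircle (1 : ℝ)

/-- The flat (Euclidean) distance on the torus. -/
noncomputable def torusDist {d : ℕ} (x y : Torus d) : ℝ :=
  Real.sqrt (∑ i, dist (x i) (y i) ^ 2)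

open Metric Set
open scoped NNReal ENNReal

lemma exists_mem_range_abs_sub_le_div {a b t : ℝ} {n : ℕ} (hn : 0 < n) (ht : t ∈ Icc a b) :
    ∃ k ∈ Finset.range (n + 1), |t - (a + k * ((b - a) / n))| ≤ (b - a) / n := by
  set h := (b - a) / n with hh
  have hnh : n * h = b - a := by rw [hh]; field_simp
  rcases (div_nonneg (sub_nonneg.2 (ht.1.trans ht.2)) (Nat.cast_nonneg n)).eq_or_lt with h0 | hpos
  · have hta : t = a := by nlinarith [ht.1, ht.2]
    exact ⟨0, by simp, by simp [hta, hh, ← h0]⟩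
  · set k := ⌊(t - a) / h⌋₊
    have hk : k * h ≤ t - a :=
      (le_div_iff₀ hpos).1 (Nat.floor_le (div_nonneg (sub_nonneg.2 ht.1) hpos.le))
    have hk' : t - a < (k + 1) * h := (div_lt_iff₀ hpos).1 (Nat.lt_floor_add_one _)
    refine ⟨k, Finset.mem_range_succ_iff.2 ?_, abs_le.2 ⟨by linarith, by linarith⟩⟩
    have hkn : (k : ℝ) ≤ n := le_of_mul_le_mul_right (by linarith [ht.2]) hpos
    exact_mod_cast hkn

lemma setOf_exists_dist_le_subset_biUnion_closedBall {X : Type*} [PseudoMetricSpace X]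
    {γ : ℝ → X} {K : ℝ≥0} (hγ : LipschitzWith K γ) {a b ε : ℝ} {n : ℕ} (hn : 0 < n)
    (hKn : K * (b - a) ≤ n * ε) :
    {x | ∃ t ∈ Icc a b, dist x (γ t) ≤ ε} ⊆
      ⋃ k ∈ Finset.range (n + 1), closedBall (γ (a + k * ((b - a) / n))) (2 * ε) := by
  rintro x ⟨t, ht, hx⟩
  obtain ⟨k, hk, htk⟩ := exists_mem_range_abs_sub_le_div hn ht
  refine mem_biUnion hk ?_
  have hstep : K * ((b - a) / n) ≤ ε := by
    rw [mul_div_assoc', div_le_iff₀ (by positivity)]; linarith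
  calc dist x (γ _) ≤ dist x (γ t) + dist (γ t) (γ _) := dist_triangle _ _ _
    _ ≤ ε + K * |t - (a + k * ((b - a) / n))| :=
      add_le_add hx (by rw [← Real.dist_eq]; exact hγ.dist_le_mul _ _)
    _ ≤ ε + ε := by gcongr; exact (mul_le_mul_of_nonneg_left htk K.2).trans hstep
    _ = 2 * ε := by ring

lemma measure_setOf_exists_dist_le_le {X : Type*} [PseudoMetricSpace X] [MeasurableSpace X]
    (μ : Measure X) {γ : ℝ → X} {K : ℝ≥0} (hγ : LipschitzWith K γ) {a b ε : ℝ} {n : ℕ}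
    (hn : 0 < n) (hKn : K * (b - a) ≤ n * ε) {m : ℝ≥0∞}
    (hball : ∀ x, μ (closedBall x (2 * ε)) ≤ m) :
    μ {x | ∃ t ∈ Icc a b, dist x (γ t) ≤ ε} ≤ (n + 1) * m :=
  calc μ {x | ∃ t ∈ Icc a b, dist x (γ t) ≤ ε}
      ≤ μ (⋃ k ∈ Finset.range (n + 1), closedBall (γ (a + k * ((b - a) / n))) (2 * ε)) :=
        measure_mono (setOf_exists_dist_le_subset_biUnion_closedBall hγ hn hKn)
    _ ≤ ∑ k ∈ Finset.range (n + 1), μ (closedBall (γ (a + k * ((b - a) / n))) (2 * ε)) :=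
        measure_biUnion_finset_le _ _
    _ ≤ (Finset.range (n + 1)).card • m := Finset.sum_le_card_nsmul _ _ _ fun k _ => hball _
    _ = (n + 1) * m := by simp [nsmul_eq_mul]

lemma dist_le_torusDist {d : ℕ} (x y : Torus d) : dist x y ≤ torusDist x y := by
  refine (dist_pi_le_iff (Real.sqrt_nonneg _)).2 fun i => ?_
  rw [← Real.sqrt_sq dist_nonneg]
  exact Real.sqrt_le_sqrt
    (Finset.single_le_sum (fun j _ => sq_nonneg (dist (x j) (y j))) (Finset.mem_univ i))

lemma Torus.volume_closedBall_le {d : ℕ} (x : Torus d) {r : ℝ} (hr : 0 ≤ r) :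
    volume (closedBall x r) ≤ ENNReal.ofReal ((2 * r) ^ d) := by
  rw [volume_pi, Measure.pi_closedBall _ _ hr]
  simp_rw [AddCircle.volume_closedBall]
  rw [Finset.prod_const, Finset.card_univ, Fintype.card_fin, ← ENNReal.ofReal_pow (by positivity)]
  gcongr
  exact min_le_right _ _

lemma Torus.lipschitzWith_line {d : ℕ} (w : EuclideanSpace ℝ (Fin d)) :
    LipschitzWith ‖w‖₊ fun t : ℝ => fun i => ((t * w i : ℝ) : AddCircle (1 : ℝ)) := by
  refine LipschitzWith.of_dist_le_mul fun s t => (dist_pi_le_iff (by positivity)).2 fun i => ?_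
  calc dist ((s * w i : ℝ) : AddCircle (1 : ℝ)) (t * w i)
      = ‖((s * w i - t * w i : ℝ) : AddCircle (1 : ℝ))‖ := by rw [dist_eq_norm, AddCircle.coe_sub]
    _ ≤ |s * w i - t * w i| := QuotientAddGroup.norm_mk_le_norm
    _ = ‖w i‖ * dist s t := by rw [Real.dist_eq, ← sub_mul, abs_mul, mul_comm, Real.norm_eq_abs]
    _ ≤ ‖w‖₊ * dist s t := by gcongr; exact PiLp.norm_apply_le w i

lemma dist_neg_le_torusDist_add {d : ℕ} (x c : Torus d) :
    dist x (-c) ≤ torusDist (x + c) 0 := by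
  rw [← dist_add_right x (-c) c, neg_add_cancel]
  exact dist_le_torusDist _ _

lemma natCeil_div_add_two_mul_pow_le {L ε : ℝ} (hL : 0 ≤ L) (hε : 0 < ε) {d : ℕ} (hd : 1 ≤ d) :
    (⌈L / ε⌉₊ + 2) * (4 * ε) ^ d ≤ 3 * 4 ^ d * ε ^ (d - 1) * (L + ε) := by
  have hceil : (⌈L / ε⌉₊ + 2) * ε ≤ L + 3 * ε := by
    have := Nat.ceil_lt_add_one (div_nonneg hL hε.le)
    calc (⌈L / ε⌉₊ + 2) * ε ≤ (L / ε + 3) * ε := mul_le_mul_of_nonneg_right (by linarith) hε.le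
      _ = L + 3 * ε := by field_simp
  obtain ⟨e, rfl⟩ : ∃ e, d = e + 1 := ⟨d - 1, by omega⟩
  calc (⌈L / ε⌉₊ + 2) * (4 * ε) ^ (e + 1) = 4 ^ (e + 1) * ε ^ e * ((⌈L / ε⌉₊ + 2) * ε) := by ring
    _ ≤ 4 ^ (e + 1) * ε ^ e * (3 * (L + ε)) :=
      mul_le_mul_of_nonneg_left (by linarith) (by positivity)
    _ = _ := by rw [Nat.add_sub_cancel]; ring

/-- Tube estimate: the Haar measure of the set of points `x` of the torus such that the
straight line `t ↦ x + t w` comes within distance `ε` of the origin at some time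
`t ∈ [t₀, t₁]` is at most `C_d ε^{d-1} (|w| (t₁ - t₀) + ε)`. -/
theorem tube_estimate (d : ℕ) (hd : 2 ≤ d) :
    ∃ C : ℝ, 0 < C ∧
      ∀ ε : ℝ, 0 < ε → ε < 1 → ∀ w : EuclideanSpace ℝ (Fin d), ∀ t₀ t₁ : ℝ,
        0 ≤ t₀ → t₀ ≤ t₁ →
          volume {x : Torus d | ∃ t ∈ Set.Icc t₀ t₁,
              torusDist (fun i => x i + ((t * w i : ℝ) : AddCircle (1 : ℝ))) 0 ≤ ε}
            ≤ ENNReal.ofReal (C * ε ^ (d - 1) * (‖w‖ * (t₁ - t₀) + ε)) := by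
  refine ⟨3 * 4 ^ d, by positivity, fun ε hε _ w t₀ t₁ _ ht => ?_⟩
  set L := ‖w‖ * (t₁ - t₀)
  set n := ⌈L / ε⌉₊ + 1
  have hKn : (‖w‖₊ : ℝ) * (t₁ - t₀) ≤ n * ε := by
    rw [coe_nnnorm, ← div_le_iff₀ hε]; push_cast [n]; linarith [Nat.le_ceil (L / ε)]
  calc _ ≤ volume {x | ∃ t ∈ Icc t₀ t₁,
          dist x (-fun i => ((t * w i : ℝ) : AddCircle (1 : ℝ))) ≤ ε} :=
        measure_mono <| by
          rintro x ⟨t, ht, hx⟩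
          exact ⟨t, ht, (dist_neg_le_torusDist_add _ _).trans hx⟩
    _ ≤ (n + 1) * ENNReal.ofReal ((2 * (2 * ε)) ^ d) :=
      measure_setOf_exists_dist_le_le _ (Torus.lipschitzWith_line w).neg (Nat.succ_pos _) hKn
        fun x => Torus.volume_closedBall_le x (by positivity)
    _ = ENNReal.ofReal ((⌈L / ε⌉₊ + 2) * (4 * ε) ^ d) := by
      rw [← ENNReal.ofReal_natCast, ← ENNReal.ofReal_one,
        ← ENNReal.ofReal_add (by positivity) zero_le_one, ← ENNReal.ofReal_mul (by positivity)]
      push_cast [n]; ring_nf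
    _ ≤ _ := ENNReal.ofReal_le_ofReal <|
      natCeil_div_add_two_mul_pow_le (mul_nonneg (norm_nonneg w) (sub_nonneg.2 ht)) hε (by omega)
end

section
/- (Low-density normalization of the mean particle number.) Let d ≥ 2 and, for ε ∈ (0,1), let μ_ε = ε^{−(d−1)}. Then the mean number of particles under the grand canonical hard-sphere equilibrium measure, 𝔼^eq_ε[𝒩] := (1/𝒵^ε) ∑_{N≥0} (μ_ε^N / N!) N ∫_{𝕋^{dN}} ∏_{i≠j} 1_{|x_i − x_j| > ε} dX_N, satisfies μ_ε^{−1} 𝔼^eq_ε[𝒩] → 1 as ε → 0 (i.e. as μ_ε → ∞). -/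
open MeasureTheory Real

noncomputable section

/-- The one-particle phase space `𝕋^d × ℝ^d`. -/
abbrev Phase (d : ℕ) := Torus d × EuclideanSpace ℝ (Fin d)

/-- The Maxwellian `𝓜(v) = (2π)^{-d/2} exp(-|v|²/2)`. -/
noncomputable def maxwellian {d : ℕ} (v : EuclideanSpace ℝ (Fin d)) : ℝ :=
  (2 * π) ^ (-(d : ℝ) / 2) * Real.exp (-‖v‖ ^ 2 / 2)

/- The hard-sphere exclusion indicator `1_{𝒟^ε_N}` (as a function of the positions). -/
open Classical in
noncomputable def exclInd {d : ℕ} (ε : ℝ) {N : ℕ} (X : Fin N → Torus d) : ℝ :=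
  if ∀ i j : Fin N, i ≠ j → ε < torusDist (X i) (X j) then 1 else 0

/-- The Boltzmann–Grad scaling factor `μ_ε = ε^{-(d-1)}`. -/
noncomputable def muBG (d : ℕ) (ε : ℝ) : ℝ := (ε ^ (d - 1))⁻¹

/-- The grand canonical partition function
`𝒵^ε = ∑_N (μ_ε^N / N!) ∫ ∏_{i≠j} 1_{|x_i - x_j| > ε} dX_N` (the `N = 0` term equals `1`). -/
noncomputable def partitionZ (d : ℕ) (ε : ℝ) : ℝ :=
  ∑' N : ℕ, muBG d ε ^ N / (Nat.factorial N : ℝ) * ∫ X : Fin N → Torus d, exclInd ε X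

/-- The grand canonical equilibrium expectation of a functional
`F : ⨆_N (𝕋^d × ℝ^d)^N → ℝ`. -/
noncomputable def gceExp (d : ℕ) (ε : ℝ) (F : (N : ℕ) → (Fin N → Phase d) → ℝ) : ℝ :=
  (partitionZ d ε)⁻¹ *
    ∑' N : ℕ, muBG d ε ^ N / (Nat.factorial N : ℝ) *
      ∫ Z : Fin N → Phase d,
        exclInd ε (fun i => (Z i).1) * (∏ i, maxwellian (Z i).2) * F N Z

/-- The empirical density `π^ε(h) = μ_ε^{-1} ∑_i h(z_i)`. -/
noncomputable def empDens {d : ℕ} (ε : ℝ) (h : Phase d → ℝ) (N : ℕ)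
    (Z : Fin N → Phase d) : ℝ :=
  (muBG d ε)⁻¹ * ∑ i, h (Z i)

/-- The equilibrium fluctuation field `ζ^{ε,eq}(h) = √μ_ε (π ^ε(h) - 𝔼^eq_ε[π^ε(h)])`. -/
noncomputable def fluctField (d : ℕ) (ε : ℝ) (h : Phase d → ℝ) (N : ℕ)
    (Z : Fin N → Phase d) : ℝ :=
  Real.sqrt (muBG d ε) * (empDens ε h N Z - gceExp d ε (fun M W => empDens ε h M W))

end

/-!
Write `Z_N = |D^ε_N|` for the volume of the admissible `N`-particle configurations; the torus
has volume one, so `Z_0 = Z_1 = 1`. Forgetting a particle gives `Z_{N+1} ≤ Z_N`. Conversely a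
particle added at `y` to a configuration of `D^ε_{N+1}` is admissible unless `y` lies within `ε`
of one of the `N + 1` others, so `Z_{N+1} ≤ Z_{N+2} + (N+1)(2ε)^d Z_N`.
Since `N μ^N / N! = μ · μ^(N-1) / (N-1)!`, the quantity of the theorem is `S' / S` with
`S = ∑ μ^N/N! Z_N` and `S' = ∑ μ^N/N! Z_{N+1}`. The first comparison gives `S' ≤ S`, the second
`S ≤ S' + (2ε)^d μ_ε S`, and `(2ε)^d μ_ε = 2^d ε → 0`.
-/

open MeasureTheory Filter Topology

instance : IsProbabilityMeasure (volume : Measure (AddCircle (1 : ℝ))) := ⟨by simp⟩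

section GrandSum

open Nat

noncomputable def grandSum (μ : ℝ) (a : ℕ → ℝ) : ℝ := ∑' N, μ ^ N / N ! * a N

variable {μ : ℝ} {a : ℕ → ℝ}

lemma summable_pow_div_factorial_mul {C : ℝ} (ha : ∀ N, |a N| ≤ C) :
    Summable fun N => μ ^ N / N ! * a N :=
  ((Real.summable_pow_div_factorial |μ|).mul_right C).of_norm_bounded fun N => by
    rw [Real.norm_eq_abs, abs_mul, abs_div, abs_pow, Nat.abs_cast]
    exact mul_le_mul_of_nonneg_left (ha N) (by positivity)

lemma hasSum_pow_div_factorial_natCast_mul {s : ℝ}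
    (h : HasSum (fun N => μ ^ N / N ! * a (N + 1)) s) :
    HasSum (fun N => μ ^ N / N ! * (N * a N)) (μ * s) := by
  have hterm (N : ℕ) :
      μ ^ (N + 1) / (N + 1)! * ((N + 1 : ℕ) * a (N + 1)) = μ * (μ ^ N / N ! * a (N + 1)) := by
    rw [pow_succ, Nat.factorial_succ]
    push_cast
    field_simp
  refine (hasSum_nat_add_iff' 1).1 ?_
  simp only [Finset.sum_range_one, Nat.cast_zero, zero_mul, mul_zero, sub_zero, hterm]
  exact h.mul_left μ

lemma grandSum_succ_le (hμ : 0 ≤ μ) {C : ℝ} (ha : ∀ N, |a N| ≤ C) (hanti : Antitone a) :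
    grandSum μ (fun N => a (N + 1)) ≤ grandSum μ a :=
  (summable_pow_div_factorial_mul fun N => ha (N + 1)).tsum_le_tsum
    (fun N => mul_le_mul_of_nonneg_left (hanti N.le_succ) (by positivity))
    (summable_pow_div_factorial_mul ha)

-- At `N = 0` the truncated `N - 1` is harmless: `hrec 0` reads `a 0 ≤ a 1`.
lemma grandSum_le_add (hμ : 0 ≤ μ) {C δ : ℝ} (ha : ∀ N, |a N| ≤ C)
    (hrec : ∀ N, a N ≤ a (N + 1) + N * δ * a (N - 1)) :
    grandSum μ a ≤ grandSum μ (fun N => a (N + 1)) + δ * μ * grandSum μ a := by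
  have hshift := (summable_pow_div_factorial_mul (μ := μ) fun N => ha (N + 1)).hasSum
  have hmean : HasSum (fun N => μ ^ N / N ! * (N * a (N - 1))) (μ * grandSum μ a) :=
    hasSum_pow_div_factorial_natCast_mul <| by
      simp only [add_tsub_cancel_right]; exact (summable_pow_div_factorial_mul ha).hasSum
  rw [mul_assoc]
  refine hasSum_le (fun N => ?_) (summable_pow_div_factorial_mul ha).hasSum
    (hshift.add (hmean.mul_left δ))
  calc μ ^ N / N ! * a N ≤ μ ^ N / N ! * (a (N + 1) + N * δ * a (N - 1)) :=
        mul_le_mul_of_nonneg_left (hrec N) (by positivity)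
    _ = _ := by ring

lemma grandSum_succ_div_mem_Icc (hμ : 0 ≤ μ) {δ : ℝ} (ha : ∀ N, 0 ≤ a N) (ha₀ : 0 < a 0)
    (hanti : Antitone a) (hrec : ∀ N, a N ≤ a (N + 1) + N * δ * a (N - 1)) :
    grandSum μ (fun N => a (N + 1)) / grandSum μ a ∈ Set.Icc (1 - δ * μ) 1 := by
  have hbdd (N : ℕ) : |a N| ≤ a 0 := (abs_of_nonneg (ha N)).trans_le (hanti N.zero_le)
  have hS : a 0 ≤ grandSum μ a := by
    unfold grandSum
    simpa using (summable_pow_div_factorial_mul hbdd).le_tsum 0 fun N _ =>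
      mul_nonneg (by positivity) (ha N)
  have hSpos := ha₀.trans_le hS
  rw [Set.mem_Icc, le_div_iff₀ hSpos, div_le_one hSpos]
  exact ⟨by linarith [grandSum_le_add hμ hbdd hrec], grandSum_succ_le hμ hbdd hanti⟩

end GrandSum

namespace HardSphere

variable {d : ℕ}

lemma torusDist_comm (x y : Torus d) : torusDist x y = torusDist y x := by
  simp only [torusDist, dist_comm]

lemma dist_le_torusDist (x y : Torus d) (k : Fin d) : dist (x k) (y k) ≤ torusDist x y :=
  (Real.le_sqrt dist_nonneg (by positivity)).2 <|
    Finset.single_le_sum (f := fun i => dist (x i) (y i) ^ 2) (fun _ _ => sq_nonneg _)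
      (Finset.mem_univ k)

@[fun_prop]
lemma _root_.Continuous.torusDist {α : Type*} [TopologicalSpace α] {f g : α → Torus d}
    (hf : Continuous f) (hg : Continuous g) : Continuous fun a => torusDist (f a) (g a) :=
  Real.continuous_sqrt.comp <| continuous_finsetSum _ fun k _ =>
    (((continuous_apply k).comp hf).dist ((continuous_apply k).comp hg)).pow 2

lemma volume_setOf_torusDist_le {ε : ℝ} (hε : 0 ≤ ε) (y : Torus d) :
    volume {x : Torus d | torusDist y x ≤ ε} ≤ ENNReal.ofReal ((2 * ε) ^ d) := by
  have hsub : {x : Torus d | torusDist y x ≤ ε} ⊆ Set.univ.pi fun k => Metric.closedBall (y k) ε :=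
    fun x hx => Set.mem_univ_pi.2 fun k =>
      Metric.mem_closedBall.2 <| (dist_comm (x k) (y k)).trans_le <|
        (dist_le_torusDist y x k).trans hx
  calc volume {x : Torus d | torusDist y x ≤ ε}
      ≤ ∏ k, volume (Metric.closedBall (y k) ε) := (measure_mono hsub).trans_eq (volume_pi_pi _)
    _ ≤ ∏ _k : Fin d, ENNReal.ofReal (2 * ε) := Finset.prod_le_prod' fun k _ => by
        rw [AddCircle.volume_closedBall]
        exact ENNReal.ofReal_le_ofReal inf_le_right
    _ = ENNReal.ofReal ((2 * ε) ^ d) := by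
        rw [Finset.prod_const, Finset.card_univ, Fintype.card_fin,
          ENNReal.ofReal_pow (by positivity)]

def exclSet (d : ℕ) (ε : ℝ) (N : ℕ) : Set (Fin N → Torus d) :=
  {X | ∀ i j, i ≠ j → ε < torusDist (X i) (X j)}

variable {ε : ℝ} {N : ℕ}

lemma isOpen_exclSet : IsOpen (exclSet d ε N) := by
  simp only [exclSet, Set.ofPred_forall]
  refine isOpen_iInter_of_finite fun i => isOpen_iInter_of_finite fun j =>
    isOpen_iInter_of_finite fun _ => ?_
  exact isOpen_lt continuous_const (by fun_prop)

lemma exclInd_eq_indicator (X : Fin N → Torus d) :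
    exclInd ε X = (exclSet d ε N).indicator 1 X := by
  simp only [exclInd, Set.indicator, exclSet, Set.mem_ofPred_eq, Pi.one_apply]
  congr

lemma exclSet_eq_univ (hN : N ≤ 1) : exclSet d ε N = Set.univ :=
  Set.eq_univ_of_forall fun _ i j hij => absurd (Fin.ext (by omega)) hij

lemma exclSet_succ :
    exclSet d ε (N + 1) = MeasurableEquiv.piFinSuccAbove (fun _ => Torus d) 0 ⁻¹'
      {p | p.2 ∈ exclSet d ε N ∧ ∀ j, ε < torusDist p.1 (p.2 j)} := by
  ext X
  simp [exclSet, Fin.forall_fin_succ, Fin.tail, torusDist_comm (X 0), (Fin.succ_ne_zero _).symm,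
    forall_and]
  tauto

lemma volume_exclSet_succ :
    volume (exclSet d ε (N + 1)) =
      ∫⁻ y, volume {X | X ∈ exclSet d ε N ∧ ∀ j, ε < torusDist y (X j)} := by
  have hT : MeasurableSet
      {p : Torus d × (Fin N → Torus d) | p.2 ∈ exclSet d ε N ∧ ∀ j, ε < torusDist p.1 (p.2 j)} := by
    refine (IsOpen.inter (isOpen_exclSet.preimage continuous_snd) ?_).measurableSet
    show IsOpen {p : Torus d × (Fin N → Torus d) | ∀ j, ε < torusDist p.1 (p.2 j)}
    simp only [Set.ofPred_forall]
    exact isOpen_iInter_of_finite fun j => isOpen_lt continuous_const (by fun_prop)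
  rw [exclSet_succ, (volume_preserving_piFinSuccAbove (fun _ => Torus d) 0).measure_preimage
    hT.nullMeasurableSet, Measure.volume_eq_prod, Measure.prod_apply hT]
  rfl

lemma volume_exclSet_succ_le : volume (exclSet d ε (N + 1)) ≤ volume (exclSet d ε N) := by
  rw [volume_exclSet_succ]
  exact (lintegral_mono fun y => measure_mono fun X hX => hX.1).trans_eq (by simp)

lemma volume_exclSet_near_le (hε : 0 ≤ ε) (k : Fin (N + 1)) (y : Torus d) :
    volume {X | X ∈ exclSet d ε (N + 1) ∧ torusDist y (X k) ≤ ε} ≤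
      ENNReal.ofReal ((2 * ε) ^ d) * volume (exclSet d ε N) := by
  have hB : MeasurableSet {x : Torus d | torusDist y x ≤ ε} :=
    (isClosed_le (by fun_prop) continuous_const).measurableSet
  have hsub : {X | X ∈ exclSet d ε (N + 1) ∧ torusDist y (X k) ≤ ε} ⊆
      MeasurableEquiv.piFinSuccAbove (fun _ => Torus d) k ⁻¹'
        ({x | torusDist y x ≤ ε} ×ˢ exclSet d ε N) :=
    fun X hX => ⟨hX.2, fun i j hij => hX.1 _ _ (Fin.succAbove_right_injective.ne hij)⟩
  calc _ ≤ _ := measure_mono hsub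
    _ = volume {x : Torus d | torusDist y x ≤ ε} * volume (exclSet d ε N) := by
      rw [(volume_preserving_piFinSuccAbove _ k).measure_preimage
        (hB.prod isOpen_exclSet.measurableSet).nullMeasurableSet, Measure.volume_eq_prod,
        Measure.prod_prod]
    _ ≤ _ := mul_le_mul_left (volume_setOf_torusDist_le hε y) _

lemma volume_exclSet_le_add (hε : 0 ≤ ε) :
    volume (exclSet d ε (N + 1)) ≤ volume (exclSet d ε (N + 2)) +
      (N + 1) * ENNReal.ofReal ((2 * ε) ^ d) * volume (exclSet d ε N) := by
  set C := (N + 1) * ENNReal.ofReal ((2 * ε) ^ d) * volume (exclSet d ε N)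
  have hslice (y : Torus d) : volume (exclSet d ε (N + 1)) ≤
      volume {X | X ∈ exclSet d ε (N + 1) ∧ ∀ j, ε < torusDist y (X j)} + C :=
    calc volume (exclSet d ε (N + 1))
        ≤ volume ({X | X ∈ exclSet d ε (N + 1) ∧ ∀ j, ε < torusDist y (X j)} ∪
            ⋃ j, {X | X ∈ exclSet d ε (N + 1) ∧ torusDist y (X j) ≤ ε}) := by
          refine measure_mono fun X hX => ?_
          by_cases h : ∀ j, ε < torusDist y (X j)
          · exact Or.inl ⟨hX, h⟩
          · obtain ⟨j, hj⟩ := not_forall.1 h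
            exact Or.inr (Set.mem_iUnion.2 ⟨j, hX, le_of_not_gt hj⟩)
      _ ≤ volume {X | X ∈ exclSet d ε (N + 1) ∧ ∀ j, ε < torusDist y (X j)} +
            ∑ j, volume {X | X ∈ exclSet d ε (N + 1) ∧ torusDist y (X j) ≤ ε} :=
          (measure_union_le _ _).trans (add_le_add_right (measure_iUnion_fintype_le _ _) _)
      _ ≤ _ := by
          gcongr
          refine (Finset.sum_le_sum fun j _ => volume_exclSet_near_le hε j y).trans_eq ?_
          simp [C, mul_assoc]
  calc volume (exclSet d ε (N + 1)) = ∫⁻ _ : Torus d, volume (exclSet d ε (N + 1)) := by simp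
    _ ≤ ∫⁻ y, (volume {X | X ∈ exclSet d ε (N + 1) ∧ ∀ j, ε < torusDist y (X j)} + C) :=
      lintegral_mono hslice
    _ = _ := by rw [lintegral_add_right _ measurable_const, ← volume_exclSet_succ]; simp

noncomputable def canonicalZ (d : ℕ) (ε : ℝ) (N : ℕ) : ℝ := volume.real (exclSet d ε N)

lemma integral_exclInd : ∫ X : Fin N → Torus d, exclInd ε X = canonicalZ d ε N := by
  simp only [exclInd_eq_indicator]
  exact integral_indicator_one isOpen_exclSet.measurableSet

lemma canonicalZ_nonneg : 0 ≤ canonicalZ d ε N := measureReal_nonneg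

lemma canonicalZ_eq_one (hN : N ≤ 1) : canonicalZ d ε N = 1 := by
  rw [canonicalZ, exclSet_eq_univ hN, probReal_univ]

lemma canonicalZ_antitone : Antitone (canonicalZ d ε) :=
  antitone_nat_of_succ_le fun _ => ENNReal.toReal_mono (measure_ne_top _ _) volume_exclSet_succ_le

lemma canonicalZ_le_succ_add (hε : 0 ≤ ε) (N : ℕ) :
    canonicalZ d ε N ≤ canonicalZ d ε (N + 1) + N * (2 * ε) ^ d * canonicalZ d ε (N - 1) := by
  cases N with
  | zero => simp [canonicalZ_eq_one]
  | succ N =>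
    have := ENNReal.toReal_mono (by finiteness) (volume_exclSet_le_add (d := d) (N := N) hε)
    rw [ENNReal.toReal_add (by finiteness) (by finiteness), ENNReal.toReal_mul,
      ENNReal.toReal_mul, ENNReal.toReal_ofReal (by positivity),
      ENNReal.toReal_add (by simp) ENNReal.one_ne_top] at this
    simpa [canonicalZ, measureReal_def] using this

lemma two_mul_pow_mul_muBG (hd : 1 ≤ d) (hε : ε ≠ 0) : (2 * ε) ^ d * muBG d ε = 2 ^ d * ε := by
  obtain ⟨k, rfl⟩ : ∃ k, d = k + 1 := ⟨d - 1, by omega⟩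
  simp only [muBG, add_tsub_cancel_right, mul_pow, pow_succ]
  field_simp

lemma meanNumber_div_muBG_mem_Icc (hd : 1 ≤ d) (hε : 0 < ε) :
    (muBG d ε)⁻¹ * ((partitionZ d ε)⁻¹ *
      ∑' N : ℕ, muBG d ε ^ N / (Nat.factorial N : ℝ) * (N : ℝ) *
        ∫ X : Fin N → Torus d, exclInd ε X) ∈ Set.Icc (1 - 2 ^ d * ε) 1 := by
  have hμ : 0 < muBG d ε := by unfold muBG; positivity
  have hbdd (N : ℕ) : |canonicalZ d ε N| ≤ 1 := by
    rw [abs_of_nonneg canonicalZ_nonneg]; exact measureReal_le_one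
  have hZ : partitionZ d ε = grandSum (muBG d ε) (canonicalZ d ε) := by
    simp only [partitionZ, integral_exclInd]; rfl
  have hmean : ∑' N : ℕ, muBG d ε ^ N / (Nat.factorial N : ℝ) * (N : ℝ) *
      ∫ X : Fin N → Torus d, exclInd ε X =
        muBG d ε * grandSum (muBG d ε) fun N => canonicalZ d ε (N + 1) := by
    simp only [integral_exclInd, mul_assoc]
    exact (hasSum_pow_div_factorial_natCast_mul
      (summable_pow_div_factorial_mul fun N => hbdd (N + 1)).hasSum).tsum_eq
  rw [hZ, hmean, mul_left_comm, inv_mul_cancel_left₀ hμ.ne', inv_mul_eq_div,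
    ← two_mul_pow_mul_muBG hd hε.ne']
  exact grandSum_succ_div_mem_Icc hμ.le (fun _ => canonicalZ_nonneg)
    (by rw [canonicalZ_eq_one zero_le_one]; exact one_pos) canonicalZ_antitone
    (canonicalZ_le_succ_add hε.le)

end HardSphere

/-- Low-density normalization of the mean particle number:
`μ_ε^{-1} 𝔼^eq_ε[𝒩] → 1` as `ε → 0⁺`. -/
theorem mean_particle_number_normalization (d : ℕ) (hd : 2 ≤ d) :
    Filter.Tendsto
      (fun ε : ℝ => (muBG d ε)⁻¹ *
        ((partitionZ d ε)⁻¹ *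
          ∑' N : ℕ, muBG d ε ^ N / (Nat.factorial N : ℝ) * (N : ℝ) *
            ∫ X : Fin N → Torus d, exclInd ε X))
      (nhdsWithin 0 (Set.Ioi 0)) (nhds 1) := by
  have hlow : Tendsto (fun ε : ℝ => 1 - 2 ^ d * ε) (𝓝[>] 0) (𝓝 1) :=
    ((by fun_prop : Continuous fun ε : ℝ => 1 - 2 ^ d * ε).tendsto' 0 1 (by simp)).mono_left
      nhdsWithin_le_nhds
  refine tendsto_of_tendsto_of_tendsto_of_le_of_le' hlow tendsto_const_nhds ?_ ?_ <;>
    filter_upwards [self_mem_nhdsWithin] with ε hε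
  · exact (HardSphere.meanNumber_div_muBG_mem_Icc (by omega) hε).1
  · exact (HardSphere.meanNumber_div_muBG_mem_Icc (by omega) hε).2
end

section
/- (Pointwise decomposition of a product of fluctuation fields into a ⊛-product and a contracted part, equation (6.1) for two factors.) Let E be a set, N ∈ ℕ, z_1, …, z_N ∈ E, μ > 0, m ≥ 1 an integer, h : E → ℝ, Φ : E^m → ℝ, and real constants e_h, e_Φ, e_ψ. For a function H of k variables set π_k(H) := μ^{−k} ∑_{(i_1,…,i_k) pairwise distinct in {1,…,N}} H(z_{i_1},…,z_{i_k}). Define ζ_1(h) := √μ (π_1(h) − e_h), ζ_m(Φ) := √μ (π_m(Φ) − e_Φ), the contracted observable ψ(z'_1,…,z'_m) := Φ(z'_1,…,z'_m) ∑_{j=1}^m h(z'_j) with ζ_m(ψ) := √μ (π_m(ψ) − e_ψ), and the ⊛-product ζ_1(h) ⊛ ζ_m(Φ) := μ ( π_{m+1}(h ⊗ Φ) − e_h π_m(Φ) − e_Φ π_1(h) + e_h e_Φ ), where (h ⊗ Φ)(z'_0, z'_1,…,z'_m) := h(z'_0) Φ(z'_1,…,z'_m). Then the pointwise identity ζ_1(h)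 · ζ_m(Φ) = ζ_1(h) ⊛ ζ_m(Φ) + e_ψ + μ^{−1/2} ζ_m(ψ) holds. -/
open scoped Classical

/-- The (normalized) sum over tuples of pairwise distinct indices:
`π_k(H) = μ^{-k} ∑_{(i_1,…,i_k) distinct} H(z_{i_1},…,z_{i_k})`. -/
noncomputable def piTuple {E : Type*} {N : ℕ} (z : Fin N → E) (μ : ℝ) {k : ℕ}
    (H : (Fin k → E) → ℝ) : ℝ :=
  (μ ^ k)⁻¹ *
    ∑ f ∈ Finset.filter (fun f : Fin k → Fin N => Function.Injective f) Finset.univ,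
      H (z ∘ f)

/-- Pointwise decomposition of a product of fluctuation fields into a `⊛`-product plus a
contracted part: with `ζ_1(h) = √μ (π_1(h) - e_h)`, `ζ_m(Φ) = √μ (π_m(Φ) - e_Φ)`,
`ψ(z'_1,…,z'_m) = Φ(z'_1,…,z'_m) ∑_j h(z'_j)`, `ζ_m(ψ) = √μ (π_m(ψ) - e_ψ)` and
`ζ_1(h) ⊛ ζ_m(Φ) = μ (π_{m+1}(h ⊗ Φ) - e_h π_m(Φ) - e_Φ π_1(h) + e_h e_Φ)`, one has
`ζ_1(h) · ζ_m(Φ) = ζ_1(h) ⊛ ζ_m(Φ) + e_ψ + μ^{-1/2} ζ_m(ψ)`. -/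
theorem star_product_decomposition {E : Type*} {N : ℕ} (μ : ℝ) (hμ : 0 < μ)
    {m : ℕ} (hm : 1 ≤ m) (z : Fin N → E) (h : E → ℝ) (Φ : (Fin m → E) → ℝ)
    (eh eΦ eψ : ℝ) :
    (Real.sqrt μ * (piTuple z μ (fun Y : Fin 1 → E => h (Y 0)) - eh)) *
        (Real.sqrt μ * (piTuple z μ Φ - eΦ))
      = μ * (piTuple z μ (fun Y : Fin (m + 1) → E => h (Y 0) * Φ (fun j => Y j.succ))
            - eh * piTuple z μ Φ
            - eΦ * piTuple z μ (fun Y : Fin 1 → E => h (Y 0))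
            + eh * eΦ)
        + eψ
        + (Real.sqrt μ)⁻¹ *
            (Real.sqrt μ *
              (piTuple z μ (fun Y : Fin m → E => Φ Y * ∑ j, h (Y j)) - eψ)) := by
  classical
  have hμ0 : μ ≠ 0 := ne_of_gt hμ
  have hsq : Real.sqrt μ * Real.sqrt μ = μ := Real.mul_self_sqrt hμ.le
  have hsqne : Real.sqrt μ ≠ 0 := by positivity
  set S : Finset (Fin m → Fin N) :=
    Finset.filter (fun f : Fin m → Fin N => Function.Injective f) Finset.univ with hS
  set T : Finset (Fin (m + 1) → Fin N) :=
    Finset.filter (fun f : Fin (m + 1) → Fin N => Function.Injective f) Finset.univ with hT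
  -- π₁ simplification
  have h1 : piTuple z μ (fun Y : Fin 1 → E => h (Y 0)) = μ⁻¹ * ∑ i, h (z i) := by
    unfold piTuple
    rw [pow_one]
    congr 1
    rw [Finset.filter_true_of_mem (fun f _ => Function.injective_of_subsingleton f)]
    exact Fintype.sum_equiv (Equiv.funUnique (Fin 1) (Fin N)) _ _ (fun f => rfl)
  -- combinatorial identity
  have part1 : ∑ f ∈ S, ∑ i ∈ (Finset.univ.image f)ᶜ, h (z i) * Φ (z ∘ f)
      = ∑ g ∈ T, h (z (g 0)) * Φ (z ∘ g ∘ Fin.succ) := by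
    rw [Finset.sum_sigma']
    refine Finset.sum_nbij' (fun p => Fin.cons p.2 p.1) (fun g => ⟨g ∘ Fin.succ, g 0⟩)
      ?_ ?_ ?_ ?_ ?_
    · rintro ⟨f, i⟩ hp
      simp only [Finset.mem_sigma, hS, Finset.mem_filter, Finset.mem_univ, true_and,
        Finset.mem_compl] at hp
      simp only [hT, Finset.mem_filter, Finset.mem_univ, true_and]
      refine Fin.cons_injective_iff.mpr ⟨?_, hp.1⟩
      rintro ⟨j, hj⟩
      exact hp.2 (hj ▸ Finset.mem_image_of_mem f (Finset.mem_univ j))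
    · intro g hg
      simp only [hT, Finset.mem_filter, Finset.mem_univ, true_and] at hg
      have hg' : Function.Injective (Fin.cons (g 0) (g ∘ Fin.succ) : Fin (m + 1) → Fin N) := by
        rwa [show (Fin.cons (g 0) (g ∘ Fin.succ) : Fin (m + 1) → Fin N) = g from
          Fin.cons_self_tail g]
      obtain ⟨h1', h2'⟩ := Fin.cons_injective_iff.mp hg'
      simp only [Finset.mem_sigma, hS, Finset.mem_filter, Finset.mem_univ, true_and,
        Finset.mem_compl]
      refine ⟨h2', fun hmem => ?_⟩
      obtain ⟨j, -, hj⟩ := Finset.mem_image.mp hmem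
      exact h1' ⟨j, hj⟩
    · rintro ⟨f, i⟩ -
      have hc : (Fin.cons i f : Fin (m + 1) → Fin N) ∘ Fin.succ = f := by
        funext j; simp
      simp [hc]
    · intro g hg
      exact Fin.cons_self_tail g
    · rintro ⟨f, i⟩ -
      have hc : (Fin.cons i f : Fin (m + 1) → Fin N) ∘ Fin.succ = f := by
        funext j; simp
      simp [hc]
  have part2 : ∀ f ∈ S, ∑ i ∈ Finset.univ.image f, h (z i) * Φ (z ∘ f)
      = Φ (z ∘ f) * ∑ j, h (z (f j)) := by
    intro f hf
    simp only [hS, Finset.mem_filter] at hf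
    rw [Finset.sum_image (fun a _ b _ hab => hf.2 hab), ← Finset.sum_mul, mul_comm]
  have comb : ∑ f ∈ S, ∑ i : Fin N, h (z i) * Φ (z ∘ f)
      = (∑ g ∈ T, h (z (g 0)) * Φ (z ∘ g ∘ Fin.succ))
        + ∑ f ∈ S, Φ (z ∘ f) * ∑ j, h (z (f j)) := by
    have : ∀ f ∈ S, ∑ i : Fin N, h (z i) * Φ (z ∘ f)
        = (∑ i ∈ (Finset.univ.image f)ᶜ, h (z i) * Φ (z ∘ f))
          + ∑ i ∈ Finset.univ.image f, h (z i) * Φ (z ∘ f) := by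
      intro f _
      rw [Finset.sum_compl_add_sum]
    rw [Finset.sum_congr rfl this, Finset.sum_add_distrib, part1,
      Finset.sum_congr rfl part2]
  -- key identity
  have key : μ * (piTuple z μ (fun Y : Fin 1 → E => h (Y 0)) * piTuple z μ Φ)
      = μ * piTuple z μ (fun Y : Fin (m + 1) → E => h (Y 0) * Φ (fun j => Y j.succ))
        + piTuple z μ (fun Y : Fin m → E => Φ Y * ∑ j, h (Y j)) := by
    rw [h1]
    unfold piTuple
    rw [← hS, ← hT]
    have e1 : μ * (μ⁻¹ * ∑ i, h (z i)) * ((μ ^ m)⁻¹ * ∑ f ∈ S, Φ (z ∘ f))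
        = (μ ^ m)⁻¹ * ∑ f ∈ S, ∑ i : Fin N, h (z i) * Φ (z ∘ f) := by
      rw [← mul_assoc μ, mul_inv_cancel₀ hμ0, one_mul, mul_left_comm]
      congr 1
      rw [Finset.sum_mul_sum, Finset.sum_comm]
    have hpow : μ * (μ ^ (m + 1))⁻¹ = (μ ^ m)⁻¹ := by
      rw [pow_succ]
      field_simp
    rw [← mul_assoc, e1, comb, mul_add, ← mul_assoc, hpow]
    congr 1
  have ha : (Real.sqrt μ)⁻¹ *
      (Real.sqrt μ * (piTuple z μ (fun Y : Fin m → E => Φ Y * ∑ j, h (Y j)) - eψ))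
      = piTuple z μ (fun Y : Fin m → E => Φ Y * ∑ j, h (Y j)) - eψ := by
    rw [← mul_assoc, inv_mul_cancel₀ hsqne, one_mul]
  rw [ha]
  linear_combination key + (piTuple z μ (fun Y : Fin 1 → E => h (Y 0)) - eh) *
    (piTuple z μ Φ - eΦ) * hsq
end
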